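/- Let φ : [0,∞) × ℝ² → ℝ be a smooth solution of the wave equation with nonlinearity, and suppose the energy momentum tensor is T_{μν} = ∂_μφ ∂_νφ − (1/2)m_{μν}(∂^γφ ∂_γφ + (2/(p+1))|φ|^{p+1}) on 1+2 dimensional Minkowski space with metric m = diag(−1,1,1). For the vector field X = (x₂² + (t−x₁)²)∂_t + (x₂² − (t−x₁)²)∂_{x₁} + 2(t−x₁)x₂ ∂_{x₂} and χ = t − x₁, the deformation tensor satisfies π^X := (1/2)L_X m = 2(t−x₁) m, and the bulk term T^{μν}π^X_{μν} + χ ∂_μφ∂^μφ + χ φ □φ − (1/2)(□χ)|φ|² equals −((5−p)/(p+1))(t−x₁)|φ|^{p+1} whenever □φ = |φ|^{p−1}φ. -/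

import Mathlib

open Real

noncomputable section

/-- Partial derivative `∂_μ f` on `ℝ³` (coordinates `y 0 = t`, `y 1 = x₁`, `y 2 = x₂`). -/
def pd (μ : Fin 3) (f : (Fin 3 → ℝ) → ℝ) (y : Fin 3 → ℝ) : ℝ :=
  fderiv ℝ f y (Pi.single μ 1)

/-- Second partial derivative `∂_μ ∂_ν f`. -/
def pd2 (μ ν : Fin 3) (f : (Fin 3 → ℝ) → ℝ) (y : Fin 3 → ℝ) : ℝ :=
  pd μ (pd ν f) y

/-- The wave operator `□ = -∂_t² + ∂₁² + ∂₂²` on `ℝ^{1+2}`. -/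
def Box (f : (Fin 3 → ℝ) → ℝ) (y : Fin 3 → ℝ) : ℝ :=
  -pd2 0 0 f y + pd2 1 1 f y + pd2 2 2 f y

/-- The Minkowski metric `m = diag(-1, 1, 1)` (which equals its own inverse). -/
def mink (μ ν : Fin 3) : ℝ :=
  if μ = ν then (if μ = 0 then -1 else 1) else 0

/-- The components (with upper indices) of the vector field
`X = (x₂² + (t-x₁)²)∂_t + (x₂² - (t-x₁)²)∂_{x₁} + 2(t-x₁)x₂ ∂_{x₂}`. -/
def Xv (μ : Fin 3) (y : Fin 3 → ℝ) : ℝ :=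
  if μ = 0 then (y 2) ^ 2 + (y 0 - y 1) ^ 2
  else if μ = 1 then (y 2) ^ 2 - (y 0 - y 1) ^ 2
  else 2 * (y 0 - y 1) * y 2

/-- The multiplier function `χ = t - x₁`. -/
def chi (y : Fin 3 → ℝ) : ℝ := y 0 - y 1

/-- The deformation tensor `π^X_{μν} = (1/2)(L_X m)_{μν}`; for the flat metric it equals
`(1/2)(∂_μ X^α m_{αν} + ∂_ν X^α m_{αμ})`. -/
def defTensor (μ ν : Fin 3) (y : Fin 3 → ℝ) : ℝ :=
  (1 / 2) * ∑ α : Fin 3, (pd μ (Xv α) y * mink α ν + pd ν (Xv α) y * mink α μ)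

/-- The energy momentum tensor
`T_{μν} = ∂_μφ ∂_νφ - (1/2) m_{μν}(∂^γφ ∂_γφ + (2/(p+1))|φ|^{p+1})`. -/
def emTensor (p : ℝ) (φ : (Fin 3 → ℝ) → ℝ) (μ ν : Fin 3) (y : Fin 3 → ℝ) : ℝ :=
  pd μ φ y * pd ν φ y -
    (1 / 2) * mink μ ν *
      ((∑ α : Fin 3, ∑ β : Fin 3, mink α β * pd α φ y * pd β φ y) +
        (2 / (p + 1)) * |φ y| ^ (p + 1))

/-- Projection as a continuous linear map. -/
def pr (i : Fin 3) : (Fin 3 → ℝ) →L[ℝ] ℝ := ContinuousLinearMap.proj i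

lemma hproj (i : Fin 3) (y : Fin 3 → ℝ) :
    HasFDerivAt (fun y : Fin 3 → ℝ => y i) (pr i) y :=
  (pr i).hasFDerivAt

lemma pr_single (i μ : Fin 3) : pr i (Pi.single μ 1) = if i = μ then 1 else 0 := by
  simp [pr, Pi.single_apply]

lemma hu (y : Fin 3 → ℝ) :
    HasFDerivAt (fun y : Fin 3 → ℝ => y 0 - y 1) (pr 0 - pr 1) y :=
  (hproj 0 y).sub (hproj 1 y)

lemma hXv0 (y : Fin 3 → ℝ) : HasFDerivAt (Xv 0)
    ((y 2 • pr 2 + y 2 • pr 2) + ((y 0 - y 1) • (pr 0 - pr 1) + (y 0 - y 1) • (pr 0 - pr 1))) y := by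
  have : Xv 0 = fun y : Fin 3 → ℝ => y 2 * y 2 + (y 0 - y 1) * (y 0 - y 1) := by
    funext y; simp [Xv]; ring
  rw [this]
  exact ((hproj 2 y).mul (hproj 2 y)).add ((hu y).mul (hu y))

lemma hXv1 (y : Fin 3 → ℝ) : HasFDerivAt (Xv 1)
    ((y 2 • pr 2 + y 2 • pr 2) - ((y 0 - y 1) • (pr 0 - pr 1) + (y 0 - y 1) • (pr 0 - pr 1))) y := by
  have : Xv 1 = fun y : Fin 3 → ℝ => y 2 * y 2 - (y 0 - y 1) * (y 0 - y 1) := by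
    funext y; simp [Xv]; ring
  rw [this]
  exact ((hproj 2 y).mul (hproj 2 y)).sub ((hu y).mul (hu y))

lemma hXv2 (y : Fin 3 → ℝ) : HasFDerivAt (Xv 2)
    ((2 * (y 0 - y 1)) • pr 2 + y 2 • ((2:ℝ) • (pr 0 - pr 1))) y := by
  have : Xv 2 = fun y : Fin 3 → ℝ => (2 * (y 0 - y 1)) * y 2 := by
    funext y; simp [Xv]
  rw [this]
  exact ((hu y).const_mul 2).mul (hproj 2 y)

lemma pd_Xv (α μ : Fin 3) (y : Fin 3 → ℝ) :
    pd μ (Xv α) y =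
      if α = 0 then (if μ = 0 then 2 * (y 0 - y 1) else if μ = 1 then -(2 * (y 0 - y 1)) else 2 * y 2)
      else if α = 1 then (if μ = 0 then -(2 * (y 0 - y 1)) else if μ = 1 then 2 * (y 0 - y 1) else 2 * y 2)
      else (if μ = 0 then 2 * y 2 else if μ = 1 then -(2 * y 2) else 2 * (y 0 - y 1)) := by
  have h0 : pd μ (Xv 0) y = ((y 2 • pr 2 + y 2 • pr 2) + ((y 0 - y 1) • (pr 0 - pr 1) + (y 0 - y 1) • (pr 0 - pr 1))) (Pi.single μ 1) := by
    rw [pd, (hXv0 y).fderiv]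
  have h1 : pd μ (Xv 1) y = ((y 2 • pr 2 + y 2 • pr 2) - ((y 0 - y 1) • (pr 0 - pr 1) + (y 0 - y 1) • (pr 0 - pr 1))) (Pi.single μ 1) := by
    rw [pd, (hXv1 y).fderiv]
  have h2 : pd μ (Xv 2) y = ((2 * (y 0 - y 1)) • pr 2 + y 2 • ((2:ℝ) • (pr 0 - pr 1))) (Pi.single μ 1) := by
    rw [pd, (hXv2 y).fderiv]
  fin_cases α <;> fin_cases μ <;>
    simp_all [pr_single, Fin.ext_iff] <;> ring

lemma pd_chi (μ : Fin 3) (y : Fin 3 → ℝ) :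
    pd μ chi y = if μ = 0 then 1 else if μ = 1 then -1 else 0 := by
  have h : pd μ chi y = (pr 0 - pr 1) (Pi.single μ 1) := by
    rw [pd]
    have : chi = fun y : Fin 3 → ℝ => y 0 - y 1 := rfl
    rw [this, (hu y).fderiv]
  fin_cases μ <;> simp_all [pr_single, Fin.ext_iff]

lemma box_chi (y : Fin 3 → ℝ) : Box chi y = 0 := by
  have hc : ∀ ν : Fin 3, ∀ μ : Fin 3, pd2 μ ν chi y = 0 := by
    intro ν μ
    have : pd ν chi = fun _ : Fin 3 → ℝ => (if ν = 0 then 1 else if ν = 1 then -1 else 0 : ℝ) := by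
      funext z; exact pd_chi ν z
    rw [pd2, pd, this, fderiv_fun_const]
    simp
  simp [Box, hc]

lemma defT (μ ν : Fin 3) (y : Fin 3 → ℝ) :
    defTensor μ ν y = 2 * (y 0 - y 1) * mink μ ν := by
  simp only [defTensor, Fin.sum_univ_three, pd_Xv]
  fin_cases μ <;> fin_cases ν <;> norm_num [mink, Fin.ext_iff] <;> ring

set_option maxHeartbeats 2000000 in
theorem stmt_18 (p : ℝ) (hp : 1 < p) (φ : (Fin 3 → ℝ) → ℝ) (hφ : ContDiff ℝ (⊤ : ℕ∞) φ)
    (hwave : ∀ y, Box φ y = |φ y| ^ (p - 1) * φ y) (y : Fin 3 → ℝ) :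
    (∀ μ ν : Fin 3, defTensor μ ν y = 2 * (y 0 - y 1) * mink μ ν) ∧
    (∑ μ : Fin 3, ∑ ν : Fin 3,
        (∑ α : Fin 3, ∑ β : Fin 3, mink μ α * mink ν β * emTensor p φ α β y) *
          defTensor μ ν y) +
      chi y * (∑ μ : Fin 3, ∑ ν : Fin 3, mink μ ν * pd μ φ y * pd ν φ y) +
      chi y * φ y * Box φ y - (1 / 2) * Box chi y * (φ y) ^ 2 =
      -((5 - p) / (p + 1)) * (y 0 - y 1) * |φ y| ^ (p + 1) := by
  refine ⟨fun μ ν => defT μ ν y, ?_⟩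
  have hpne : p + 1 ≠ 0 := by linarith
  have hkey : φ y * (|φ y| ^ (p - 1) * φ y) = |φ y| ^ (p + 1) := by
    rcases eq_or_ne (φ y) 0 with h | h
    · simp [h, Real.zero_rpow hpne]
    · have h2 : φ y * φ y = |φ y| ^ (2 : ℝ) := by
        rw [show (2:ℝ) = ((2:ℕ):ℝ) by norm_num, Real.rpow_natCast, sq_abs]
        ring
      calc φ y * (|φ y| ^ (p - 1) * φ y) = |φ y| ^ (p - 1) * (φ y * φ y) := by ring
        _ = |φ y| ^ (p - 1) * |φ y| ^ (2 : ℝ) := by rw [h2]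
        _ = |φ y| ^ (p + 1) := by
            rw [← Real.rpow_add (abs_pos.mpr h)]; ring_nf
  set d0 := pd 0 φ y with hd0
  set d1 := pd 1 φ y with hd1
  set d2 := pd 2 φ y with hd2
  set a := φ y with ha
  have hQ : (∑ μ : Fin 3, ∑ ν : Fin 3, mink μ ν * pd μ φ y * pd ν φ y) =
      -(d0 * d0) + d1 * d1 + d2 * d2 := by
    simp only [Fin.sum_univ_three, ← hd0, ← hd1, ← hd2]
    norm_num [mink, Fin.ext_iff]
  have hE : ∀ α β : Fin 3, emTensor p φ α β y =
      pd α φ y * pd β φ y -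
        (1 / 2) * mink α β * ((-(d0 * d0) + d1 * d1 + d2 * d2) + (2 / (p + 1)) * |a| ^ (p + 1)) := by
    intro α β
    rw [emTensor, hQ]
  have hS : (∑ μ : Fin 3, ∑ ν : Fin 3,
      (∑ α : Fin 3, ∑ β : Fin 3, mink μ α * mink ν β * emTensor p φ α β y) *
        defTensor μ ν y) =
      2 * (y 0 - y 1) *
        (-emTensor p φ 0 0 y + emTensor p φ 1 1 y + emTensor p φ 2 2 y) := by
    simp only [Fin.sum_univ_three, defT]
    norm_num [mink, Fin.ext_iff]
    ring
  rw [hwave y, box_chi, hS, hQ, hE 0 0, hE 1 1, hE 2 2]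
  simp only [chi, ← hd0, ← hd1, ← hd2, ← ha]
  norm_num [mink, Fin.ext_iff]
  field_simp
  linear_combination ((y 0 - y 1) * (p + 1)) * hkey
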